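/- arXiv:1704.03864 — 4 statements merged into one kernel-verified Lean document; each statement's English description precedes it below -/
import Mathlib

section
/- Let f(w) = (w² + 2w − 1)/(w² − 2w − 1). Then |f(w)| ≤ 1 for all w in the closed half-disk {w ∈ ℂ : |w| ≤ 1 and Re(w) ≥ 0}. -/
/-!
With `a = w² - 1` and `b = 2w`, the quotient is `(a + b) / (a - b)`, and
`‖a + b‖² - ‖a - b‖² = 4 ⟪a, b⟫_ℝ = 8 Re w (‖w‖² - 1)`, which is `≤ 0` on the half-disk.
-/

theorem norm_add_le_norm_sub_of_inner_nonpos {E : Type*} [NormedAddCommGroup E]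
    [InnerProductSpace ℝ E] {x y : E} (h : inner ℝ x y ≤ 0) : ‖x + y‖ ≤ ‖x - y‖ := by
  refine (pow_le_pow_iff_left₀ (norm_nonneg _) (norm_nonneg _) two_ne_zero).mp ?_
  rw [norm_add_sq_real, norm_sub_sq_real]
  linarith

theorem Complex.inner_sq_sub_one_two_mul (w : ℂ) :
    inner ℝ (w ^ 2 - 1) (2 * w) = 2 * w.re * (‖w‖ ^ 2 - 1) := by
  rw [Complex.inner, Complex.sq_norm, Complex.normSq_apply]
  simp only [Complex.mul_re, Complex.mul_im, Complex.sub_re, Complex.sub_im, pow_two,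
    Complex.conj_re, Complex.conj_im, Complex.one_re, Complex.one_im, Complex.re_ofNat,
    Complex.im_ofNat]
  ring

/-- With `f(w) = (w²+2w-1)/(w²-2w-1)`, `|f(w)| ≤ 1` on the closed half-disk
`{|w| ≤ 1, Re w ≥ 0}`. -/
theorem abs_fMap_le_one_on_halfDisk (w : ℂ) (hw : ‖w‖ ≤ 1) (hre : 0 ≤ w.re) :
    ‖(w ^ 2 + 2 * w - 1) / (w ^ 2 - 2 * w - 1)‖ ≤ 1 := by
  have h_inner : inner ℝ (w ^ 2 - 1) (2 * w) ≤ 0 := by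
    rw [Complex.inner_sq_sub_one_two_mul]
    exact mul_nonpos_of_nonneg_of_nonpos (by positivity)
      (sub_nonpos.mpr (pow_le_one₀ (norm_nonneg w) hw))
  rw [norm_div, show w ^ 2 + 2 * w - 1 = (w ^ 2 - 1) + 2 * w by ring,
    show w ^ 2 - 2 * w - 1 = (w ^ 2 - 1) - 2 * w by ring]
  exact div_le_one_of_le₀ (norm_add_le_norm_sub_of_inner_nonpos h_inner) (norm_nonneg _)
end

section
/- For all ρ ∈ [0,1] and all c ∈ [−1,0], the Poisson kernel satisfies (1−ρ)/(1−c) − (1−ρ)² ≤ (1−ρ²)/(1−2ρc+ρ²) ≤ (1−ρ)/(1−c) + 2(1−ρ)². -/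
/-- Poisson kernel estimate: for `ρ ∈ [0,1]` and `c ∈ [-1,0]`,
`(1-ρ)/(1-c) - (1-ρ)² ≤ (1-ρ²)/(1-2ρc+ρ²) ≤ (1-ρ)/(1-c) + 2(1-ρ)²`. -/
theorem poisson_kernel_estimate (ρ c : ℝ) (hρ : ρ ∈ Set.Icc (0 : ℝ) 1)
    (hc : c ∈ Set.Icc (-1 : ℝ) 0) :
    (1 - ρ) / (1 - c) - (1 - ρ) ^ 2 ≤ (1 - ρ ^ 2) / (1 - 2 * ρ * c + ρ ^ 2) ∧
    (1 - ρ ^ 2) / (1 - 2 * ρ * c + ρ ^ 2) ≤ (1 - ρ) / (1 - c) + 2 * (1 - ρ) ^ 2 := by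
  obtain ⟨h0, h1⟩ := hρ
  obtain ⟨hc1, hc0⟩ := hc
  have hcpos : (0:ℝ) < 1 - c := by linarith
  have hD1 : (1:ℝ) ≤ 1 - 2 * ρ * c + ρ ^ 2 := by nlinarith
  have hDpos : (0:ℝ) < 1 - 2 * ρ * c + ρ ^ 2 := by linarith
  constructor
  · have h : (1 - ρ) / (1 - c) ≤ (1 - ρ ^ 2) / (1 - 2 * ρ * c + ρ ^ 2) := by
      rw [div_le_div_iff₀ hcpos hDpos]
      nlinarith [sq_nonneg (1 - ρ), mul_nonneg (sq_nonneg (1 - ρ)) (by linarith : (0:ℝ) ≤ ρ - c)]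
    nlinarith [sq_nonneg (1 - ρ)]
  · rw [div_add' _ _ _ (ne_of_gt hcpos), div_le_div_iff₀ hDpos hcpos]
    nlinarith [mul_nonneg (sq_nonneg (1 - ρ)) (by nlinarith : (0:ℝ) ≤ 2 * (1 - c) * (1 - 2 * ρ * c + ρ ^ 2) - (ρ - c))]
end

section
/- For any ρ ∈ [0,1] and c ∈ [−1,0], (1−ρ²)/(1−2ρc+ρ²) ≤ (1−ρ)/(1−c) + 2(1−ρ)². -/
/-- For `ρ ∈ [0,1]` and `c ∈ [-1,0]`, `(1-ρ²)/(1-2ρc+ρ²) ≤ (1-ρ)/(1-c) + 2(1-ρ)²`. -/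
theorem poisson_kernel_upper (ρ c : ℝ) (hρ : ρ ∈ Set.Icc (0 : ℝ) 1)
    (hc : c ∈ Set.Icc (-1 : ℝ) 0) :
    (1 - ρ ^ 2) / (1 - 2 * ρ * c + ρ ^ 2) ≤ (1 - ρ) / (1 - c) + 2 * (1 - ρ) ^ 2 := by
  obtain ⟨h0, h1⟩ := hρ
  obtain ⟨hc1, hc0⟩ := hc
  have hd : (0:ℝ) < 1 - 2 * ρ * c + ρ ^ 2 := by nlinarith
  have hd2 : (0:ℝ) < 1 - c := by linarith
  rw [div_add' _ _ _ (ne_of_gt hd2), div_le_div_iff₀ hd hd2 ]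
  nlinarith [sq_nonneg (1-ρ), sq_nonneg (1+c), mul_nonneg h0 (neg_nonneg.2 hc0), mul_nonneg (sub_nonneg.2 h1) (neg_nonneg.2 hc0), mul_nonneg (mul_nonneg (sub_nonneg.2 h1) (sub_nonneg.2 h1)) (neg_nonneg.2 hc0), mul_nonneg (mul_nonneg h0 h0) (neg_nonneg.2 hc0), mul_nonneg (mul_nonneg h0 (sub_nonneg.2 h1)) (neg_nonneg.2 hc0), sq_nonneg (ρ+c), sq_nonneg (ρ-1), mul_nonneg (mul_nonneg h0 (neg_nonneg.2 hc0)) (neg_nonneg.2 hc0), sq_nonneg ((1-ρ)*(1+c)), sq_nonneg (ρ*c), mul_nonneg (mul_nonneg (sub_nonneg.2 h1) (neg_nonneg.2 hc0)) (neg_nonneg.2 hc0)]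
end

section
/- Let G be a regular λ-expander on vertex set V of size n, and assign to each vertex v a matrix H_v ∈ ℂ^{D×D} with ‖H_v‖ ≤ ℓ and Σ_v H_v = 0. Let P̃ = P ⊗ I_D where P is the normalized adjacency matrix, and let E be the block-diagonal matrix with blocks exp(t H_v); assume ‖E‖ ≤ exp(γt). For z ∈ ℂ^{nD}, writing z^∥ for the projection onto span{𝟏 ⊗ e_i : 1 ≤ i ≤ D} and z^⊥ for the orthogonal component, the following hold: (1) ‖(E P̃ z^∥)^∥‖ ≤ (e^{tℓ} − tℓ)‖z^∥‖; (2) ‖(E P̃ z^∥)^⊥‖ ≤ (e^{tℓ} − 1)‖z^∥‖; (3) ‖(E P̃ z^⊥)^∥‖ ≤ λ(e^{tℓ} − 1)‖z^⊥‖; (4) ‖(E P̃ z^⊥)^⊥‖ ≤ λ e^{tγ}‖z^⊥‖. -/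
/-!
Write `E = I + T + R` with block-diagonal `T = diag(t H_v)` and `R = diag(exp(t H_v) - 1 - t H_v)`.
`P ⊗ I` is doubly stochastic, so it fixes parallel vectors and preserves the parallel component
of every vector, and on perpendicular vectors it contracts by `λ` column by column. `T` maps
parallel vectors to perpendicular ones because `∑ H_v = 0`. A block-diagonal matrix has norm at
most the largest norm of its blocks, and the exponential series bounds `‖exp(t H_v) - 1‖` by
`e^{tℓ} - 1` and `‖exp(t H_v) - 1 - t H_v‖` by `e^{tℓ} - 1 - tℓ`.
-/

open Matrix Kronecker

/-- Euclidean norm of a finitely-indexed complex vector. -/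
noncomputable def evnorm {ι : Type*} [Fintype ι] (z : ι → ℂ) : ℝ :=
  Real.sqrt (∑ i, ‖z i‖ ^ 2)

/-- Projection of `z ∈ ℂ^{n·D}` onto the span of the vectors `𝟏 ⊗ e_i`, `1 ≤ i ≤ D`:
averaging over the first (vertex) coordinate. -/
noncomputable def parComp (n D : ℕ) (z : Fin n × Fin D → ℂ) : Fin n × Fin D → ℂ :=
  fun p => (n : ℂ)⁻¹ * ∑ u : Fin n, z (u, p.2)

/-- Orthogonal complement component. -/
noncomputable def perpComp (n D : ℕ) (z : Fin n × Fin D → ℂ) : Fin n × Fin D → ℂ :=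
  z - parComp n D z

open Nat NormedSpace in
theorem norm_exp_sub_sum_range_le {𝕂 A : Type*} [RCLike 𝕂] [NormedRing A] [NormedAlgebra 𝕂 A]
    [CompleteSpace A] {x : A} {r : ℝ} (hx : ‖x‖ ≤ r) {m : ℕ} (hm : 0 < m) :
    ‖exp x - ∑ k ∈ Finset.range m, (k ! : 𝕂)⁻¹ • x ^ k‖ ≤
      Real.exp r - ∑ k ∈ Finset.range m, r ^ k / k ! := by
  have hf := expSeries_summable' (𝕂 := 𝕂) x
  have hg := Real.summable_pow_div_factorial r
  have hterm (k : ℕ) : ‖((k + m)! : 𝕂)⁻¹ • x ^ (k + m)‖ ≤ r ^ (k + m) / (k + m)! := by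
    rw [norm_smul, norm_inv, RCLike.norm_natCast, div_eq_inv_mul]
    gcongr
    exact (norm_pow_le' x (by omega)).trans (pow_le_pow_left₀ (norm_nonneg x) hx _)
  rw [congrFun (exp_eq_tsum 𝕂) x, Real.exp_eq_exp_ℝ, congrFun exp_eq_tsum_div r,
    ← hf.sum_add_tsum_nat_add m,
    ← hg.sum_add_tsum_nat_add m, add_sub_cancel_left, add_sub_cancel_left]
  have hf' := (summable_nat_add_iff m).2 (norm_expSeries_summable' (𝕂 := 𝕂) x)
  exact (norm_tsum_le_tsum_norm hf').trans
    (hf'.tsum_le_tsum hterm ((summable_nat_add_iff m).2 hg))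

open NormedSpace in
theorem norm_exp_sub_one_le_of_norm_le {𝕂 A : Type*} [RCLike 𝕂] [NormedRing A]
    [NormedAlgebra 𝕂 A] [CompleteSpace A] {x : A} {r : ℝ} (hx : ‖x‖ ≤ r) :
    ‖exp x - 1‖ ≤ Real.exp r - 1 := by
  simpa using norm_exp_sub_sum_range_le (𝕂 := 𝕂) hx one_pos

open NormedSpace in
theorem norm_exp_sub_one_sub_le_of_norm_le {𝕂 A : Type*} [RCLike 𝕂] [NormedRing A]
    [NormedAlgebra 𝕂 A] [CompleteSpace A] {x : A} {r : ℝ} (hx : ‖x‖ ≤ r) :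
    ‖exp x - 1 - x‖ ≤ Real.exp r - 1 - r := by
  simpa [Finset.sum_range_succ, sub_sub] using
    norm_exp_sub_sum_range_le (𝕂 := 𝕂) hx (m := 1 + 1) two_pos

section evnorm

variable {ι κ : Type*} [Fintype ι] [Fintype κ]

theorem evnorm_eq_norm_toLp (z : ι → ℂ) : evnorm z = ‖WithLp.toLp 2 z‖ := by
  rw [EuclideanSpace.norm_eq]; rfl

theorem evnorm_nonneg (z : ι → ℂ) : 0 ≤ evnorm z :=
  Real.sqrt_nonneg _

theorem evnorm_sq (z : ι → ℂ) : evnorm z ^ 2 = ∑ i, ‖z i‖ ^ 2 :=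
  Real.sq_sqrt (by positivity)

theorem evnorm_add_le (x y : ι → ℂ) : evnorm (x + y) ≤ evnorm x + evnorm y := by
  simpa only [evnorm_eq_norm_toLp, WithLp.toLp_add] using norm_add_le _ _

theorem evnorm_comp_equiv (e : κ ≃ ι) (z : ι → ℂ) : evnorm (z ∘ e) = evnorm z := by
  simp only [evnorm, Function.comp_apply, e.sum_comp fun i => ‖z i‖ ^ 2]

open scoped Matrix.Norms.L2Operator in
theorem evnorm_mulVec_le [DecidableEq κ] (M : Matrix ι κ ℂ) (x : κ → ℂ) :
    evnorm (M *ᵥ x) ≤ ‖M‖ * evnorm x := by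
  rw [evnorm_eq_norm_toLp, evnorm_eq_norm_toLp]
  exact M.l2_opNorm_mulVec (WithLp.toLp 2 x)

theorem evnorm_sq_eq_sum_rows (w : ι × κ → ℂ) :
    evnorm w ^ 2 = ∑ a, evnorm (fun b => w (a, b)) ^ 2 := by
  simp only [evnorm_sq, Fintype.sum_prod_type]

theorem evnorm_le_of_rows {C : ℝ} (hC : 0 ≤ C) {f w : ι × κ → ℂ}
    (h : ∀ a, evnorm (fun b => f (a, b)) ≤ C * evnorm (fun b => w (a, b))) :
    evnorm f ≤ C * evnorm w := by
  refine (sq_le_sq₀ (evnorm_nonneg _) (mul_nonneg hC (evnorm_nonneg _))).1 ?_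
  rw [mul_pow, evnorm_sq_eq_sum_rows, evnorm_sq_eq_sum_rows, Finset.mul_sum]
  gcongr with a
  rw [← mul_pow]
  exact pow_le_pow_left₀ (evnorm_nonneg _) (h a) 2

theorem evnorm_le_of_cols {C : ℝ} (hC : 0 ≤ C) {f w : ι × κ → ℂ}
    (h : ∀ b, evnorm (fun a => f (a, b)) ≤ C * evnorm (fun a => w (a, b))) :
    evnorm f ≤ C * evnorm w := by
  simpa only [evnorm_comp_equiv] using
    evnorm_le_of_rows (f := f ∘ Equiv.prodComm κ ι) (w := w ∘ Equiv.prodComm κ ι) hC h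

end evnorm

section parComp

variable {n D : ℕ}

theorem parComp_apply (z : Fin n × Fin D → ℂ) (v : Fin n) (i : Fin D) :
    parComp n D z (v, i) = (n : ℂ)⁻¹ * ∑ u, z (u, i) :=
  rfl

theorem parComp_add (x y : Fin n × Fin D → ℂ) :
    parComp n D (x + y) = parComp n D x + parComp n D y := by
  ext p
  simp [parComp, Finset.sum_add_distrib, mul_add]

theorem perpComp_add (x y : Fin n × Fin D → ℂ) :
    perpComp n D (x + y) = perpComp n D x + perpComp n D y := by
  simp only [perpComp, parComp_add]
  abel

theorem parComp_add_perpComp (z : Fin n × Fin D → ℂ) : parComp n D z + perpComp n D z = z :=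
  add_sub_cancel _ _

theorem sum_perpComp_col (z : Fin n × Fin D → ℂ) (i : Fin D) :
    ∑ v, perpComp n D z (v, i) = 0 := by
  rcases Nat.eq_zero_or_pos n with rfl | hn
  · simp
  simp only [perpComp, Pi.sub_apply, Finset.sum_sub_distrib, parComp_apply, Finset.sum_const,
    Finset.card_univ, Fintype.card_fin, nsmul_eq_mul]
  rw [mul_inv_cancel_left₀ (Nat.cast_ne_zero.2 hn.ne'), sub_self]

theorem parComp_perpComp (z : Fin n × Fin D → ℂ) : parComp n D (perpComp n D z) = 0 := by
  ext ⟨v, i⟩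
  simp [parComp_apply, sum_perpComp_col]

theorem parComp_parComp (z : Fin n × Fin D → ℂ) : parComp n D (parComp n D z) = parComp n D z := by
  conv_rhs => rw [← parComp_add_perpComp z]
  rw [parComp_add, parComp_perpComp, add_zero]

theorem perpComp_parComp (z : Fin n × Fin D → ℂ) : perpComp n D (parComp n D z) = 0 :=
  sub_eq_zero.2 (parComp_parComp z).symm

theorem inner_parComp_perpComp (z : Fin n × Fin D → ℂ) :
    inner ℂ (WithLp.toLp 2 (parComp n D z)) (WithLp.toLp 2 (perpComp n D z)) = 0 := by
  simp only [PiLp.inner_apply, RCLike.inner_apply, Fintype.sum_prod_type_right, parComp_apply]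
  simp [← Finset.sum_mul, sum_perpComp_col]

theorem evnorm_sq_eq_parComp_add_perpComp (z : Fin n × Fin D → ℂ) :
    evnorm z ^ 2 = evnorm (parComp n D z) ^ 2 + evnorm (perpComp n D z) ^ 2 := by
  conv_lhs => rw [← parComp_add_perpComp z]
  simp only [evnorm_eq_norm_toLp, WithLp.toLp_add, sq]
  exact norm_add_sq_eq_norm_sq_add_norm_sq_of_inner_eq_zero _ _ (inner_parComp_perpComp z)

theorem evnorm_parComp_le (z : Fin n × Fin D → ℂ) : evnorm (parComp n D z) ≤ evnorm z := by
  refine (sq_le_sq₀ (evnorm_nonneg _) (evnorm_nonneg _)).1 ?_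
  nlinarith [evnorm_sq_eq_parComp_add_perpComp z]

theorem evnorm_perpComp_le (z : Fin n × Fin D → ℂ) : evnorm (perpComp n D z) ≤ evnorm z := by
  refine (sq_le_sq₀ (evnorm_nonneg _) (evnorm_nonneg _)).1 ?_
  nlinarith [evnorm_sq_eq_parComp_add_perpComp z]

end parComp

theorem kronecker_one_mulVec_apply {R α β : Type*} [Semiring R] [Fintype α] [Fintype β]
    [DecidableEq β] (M : Matrix α α R) (w : α × β → R) (a : α) (b : β) :
    (M ⊗ₖ (1 : Matrix β β R) *ᵥ w) (a, b) = (M *ᵥ fun a' => w (a', b)) a := by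
  simp [mulVec, dotProduct, Fintype.sum_prod_type, one_apply]

theorem evnorm_kronecker_one_mulVec_le {α β : Type*} [Fintype α] [Fintype β] [DecidableEq β]
    {M : Matrix α α ℂ} {lam : ℝ} (hlam : 0 ≤ lam)
    (hM : ∀ x : α → ℂ, ∑ a, x a = 0 → evnorm (M *ᵥ x) ≤ lam * evnorm x)
    {w : α × β → ℂ} (hw : ∀ b, ∑ a, w (a, b) = 0) :
    evnorm (M ⊗ₖ (1 : Matrix β β ℂ) *ᵥ w) ≤ lam * evnorm w :=
  evnorm_le_of_cols hlam fun b => by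
    simpa only [kronecker_one_mulVec_apply] using hM _ (hw b)

section kronecker

variable {n D : ℕ} {M : Matrix (Fin n) (Fin n) ℂ}

theorem kronecker_one_mulVec_parComp (hM : ∀ u, ∑ v, M u v = 1) (z : Fin n × Fin D → ℂ) :
    M ⊗ₖ (1 : Matrix (Fin D) (Fin D) ℂ) *ᵥ parComp n D z = parComp n D z := by
  ext ⟨v, i⟩
  rw [kronecker_one_mulVec_apply]
  simp only [mulVec, dotProduct, parComp_apply, ← Finset.sum_mul, hM, one_mul]

theorem parComp_kronecker_one_mulVec (hM : ∀ v, ∑ u, M u v = 1) (w : Fin n × Fin D → ℂ) :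
    parComp n D (M ⊗ₖ (1 : Matrix (Fin D) (Fin D) ℂ) *ᵥ w) = parComp n D w := by
  ext ⟨v, i⟩
  simp only [parComp_apply, kronecker_one_mulVec_apply]
  simp only [mulVec, dotProduct]
  rw [Finset.sum_comm]
  simp only [← Finset.sum_mul, hM, one_mul]

end kronecker

/-- Block diagonal matrix with the block index in the *first* coordinate of `α × β`
(`Matrix.blockDiagonal` uses the second). -/
def blockDiagonalFst {α β R : Type*} [DecidableEq α] [Zero R] (b : α → Matrix β β R) :
    Matrix (α × β) (α × β) R :=
  Matrix.of fun p q => if p.1 = q.1 then b p.1 p.2 q.2 else 0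

section blockDiagonalFst

variable {α β R : Type*} [DecidableEq α]

theorem blockDiagonalFst_add [AddZeroClass R] (b c : α → Matrix β β R) :
    blockDiagonalFst (b + c) = blockDiagonalFst b + blockDiagonalFst c := by
  ext p q
  by_cases h : p.1 = q.1 <;> simp [blockDiagonalFst, h]

theorem blockDiagonalFst_sub [SubNegZeroMonoid R] (b c : α → Matrix β β R) :
    blockDiagonalFst (b - c) = blockDiagonalFst b - blockDiagonalFst c := by
  ext p q
  by_cases h : p.1 = q.1 <;> simp [blockDiagonalFst, h]

theorem blockDiagonalFst_one [DecidableEq β] [Zero R] [One R] :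
    blockDiagonalFst (1 : α → Matrix β β R) = 1 := by
  ext ⟨a, i⟩ ⟨a', j⟩
  by_cases h : a = a' <;> simp [blockDiagonalFst, one_apply, h]

theorem blockDiagonalFst_mulVec_eq_add [Ring R] [DecidableEq β] [Fintype α] [Fintype β]
    (b : α → Matrix β β R) (w : α × β → R) :
    blockDiagonalFst b *ᵥ w = w + blockDiagonalFst (b - 1) *ᵥ w := by
  rw [blockDiagonalFst_sub, blockDiagonalFst_one, sub_mulVec, one_mulVec, add_sub_cancel]

variable [Fintype α] [Fintype β]

theorem blockDiagonalFst_mulVec_apply [Semiring R] (b : α → Matrix β β R) (w : α × β → R)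
    (a : α) (i : β) :
    (blockDiagonalFst b *ᵥ w) (a, i) = (b a *ᵥ fun j => w (a, j)) i := by
  simp [blockDiagonalFst, mulVec, dotProduct, Fintype.sum_prod_type, ite_mul]

open scoped Matrix.Norms.L2Operator in
theorem evnorm_blockDiagonalFst_mulVec_le [DecidableEq β] {b : α → Matrix β β ℂ} {C : ℝ}
    (hC : 0 ≤ C) (hb : ∀ a, ‖b a‖ ≤ C) (w : α × β → ℂ) :
    evnorm (blockDiagonalFst b *ᵥ w) ≤ C * evnorm w :=
  evnorm_le_of_rows hC fun a => by
    simpa only [blockDiagonalFst_mulVec_apply] using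
      (evnorm_mulVec_le _ _).trans (mul_le_mul_of_nonneg_right (hb a) (evnorm_nonneg _))

end blockDiagonalFst

open scoped Matrix.Norms.L2Operator

section blockDiagonalFst_parComp

variable {n D : ℕ} {B : Fin n → Matrix (Fin D) (Fin D) ℂ} {c : ℝ}

theorem parComp_blockDiagonalFst_mulVec_parComp {X : Fin n → Matrix (Fin D) (Fin D) ℂ}
    (hX : ∑ v, X v = 0) (z : Fin n × Fin D → ℂ) :
    parComp n D (blockDiagonalFst X *ᵥ parComp n D z) = 0 := by
  ext ⟨v, i⟩
  simp only [parComp_apply, blockDiagonalFst_mulVec_apply]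
  rw [← Finset.sum_apply, ← sum_mulVec, hX, zero_mulVec]
  simp

theorem evnorm_parComp_blockDiagonalFst_mulVec_parComp_le
    {X : Fin n → Matrix (Fin D) (Fin D) ℂ} (hX : ∑ v, X v = 0) (hc : 0 ≤ c)
    (hB : ∀ v, ‖B v - 1 - X v‖ ≤ c) (z : Fin n × Fin D → ℂ) :
    evnorm (parComp n D (blockDiagonalFst B *ᵥ parComp n D z)) ≤
      (1 + c) * evnorm (parComp n D z) := by
  have hsplit : blockDiagonalFst B = 1 + blockDiagonalFst X + blockDiagonalFst (B - 1 - X) := by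
    conv_lhs => rw [show B = 1 + X + (B - 1 - X) by abel]
    rw [blockDiagonalFst_add, blockDiagonalFst_add, blockDiagonalFst_one]
  rw [hsplit, add_mulVec, add_mulVec, one_mulVec, parComp_add, parComp_add, parComp_parComp,
    parComp_blockDiagonalFst_mulVec_parComp hX, add_zero, add_mul, one_mul]
  set y := parComp n D z
  have hrest := (evnorm_parComp_le _).trans
    (evnorm_blockDiagonalFst_mulVec_le hc (b := B - 1 - X)
      (fun v => by simpa only [Pi.sub_apply, Pi.one_apply] using hB v) y)
  linarith [evnorm_add_le y (parComp n D (blockDiagonalFst (B - 1 - X) *ᵥ y))]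

theorem evnorm_perpComp_blockDiagonalFst_mulVec_parComp_le (hc : 0 ≤ c)
    (hB : ∀ v, ‖B v - 1‖ ≤ c) (z : Fin n × Fin D → ℂ) :
    evnorm (perpComp n D (blockDiagonalFst B *ᵥ parComp n D z)) ≤ c * evnorm (parComp n D z) := by
  rw [blockDiagonalFst_mulVec_eq_add, perpComp_add, perpComp_parComp, zero_add]
  exact (evnorm_perpComp_le _).trans (evnorm_blockDiagonalFst_mulVec_le hc hB _)

theorem evnorm_parComp_blockDiagonalFst_mulVec_le (hc : 0 ≤ c) (hB : ∀ v, ‖B v - 1‖ ≤ c)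
    {w : Fin n × Fin D → ℂ} (hw : parComp n D w = 0) :
    evnorm (parComp n D (blockDiagonalFst B *ᵥ w)) ≤ c * evnorm w := by
  rw [blockDiagonalFst_mulVec_eq_add, parComp_add, hw, zero_add]
  exact (evnorm_parComp_le _).trans (evnorm_blockDiagonalFst_mulVec_le hc hB _)

end blockDiagonalFst_parComp

theorem healy_lemma_general (n D : ℕ) (lam γ ℓ t : ℝ)
    (hlam : lam ∈ Set.Icc (0 : ℝ) 1) (hℓ : 0 ≤ ℓ) (ht : 0 < t)
    (P : Matrix (Fin n) (Fin n) ℝ)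
    (hPsymm : P.IsSymm)
    (hPreg : ∀ u, ∑ v, P u v = 1)
    (hPexp : ∀ x : Fin n → ℂ, (∑ i, x i) = 0 →
      evnorm ((P.map (Complex.ofReal)).mulVec x) ≤ lam * evnorm x)
    (H : Fin n → Matrix (Fin D) (Fin D) ℂ)
    (hHnorm : ∀ v, ‖Matrix.toEuclideanCLM (𝕜 := ℂ) (H v)‖ ≤ ℓ)
    (hHsum : ∑ v, H v = 0)
    (E : Matrix (Fin n × Fin D) (Fin n × Fin D) ℂ)
    (hE : E = Matrix.of fun p q =>
      if p.1 = q.1 then NormedSpace.exp ((t : ℂ) • H p.1) p.2 q.2 else 0)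
    (hEnorm : ‖Matrix.toEuclideanCLM (𝕜 := ℂ) E‖ ≤ Real.exp (γ * t))
    (z : Fin n × Fin D → ℂ) :
    evnorm (parComp n D ((E * ((P.map (Complex.ofReal)) ⊗ₖ (1 : Matrix (Fin D) (Fin D) ℂ))).mulVec
        (parComp n D z))) ≤ (Real.exp (t * ℓ) - t * ℓ) * evnorm (parComp n D z) ∧
    evnorm (perpComp n D ((E * ((P.map (Complex.ofReal)) ⊗ₖ (1 : Matrix (Fin D) (Fin D) ℂ))).mulVec
        (parComp n D z))) ≤ (Real.exp (t * ℓ) - 1) * evnorm (parComp n D z) ∧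
    evnorm (parComp n D ((E * ((P.map (Complex.ofReal)) ⊗ₖ (1 : Matrix (Fin D) (Fin D) ℂ))).mulVec
        (perpComp n D z))) ≤ lam * (Real.exp (t * ℓ) - 1) * evnorm (perpComp n D z) ∧
    evnorm (perpComp n D ((E * ((P.map (Complex.ofReal)) ⊗ₖ (1 : Matrix (Fin D) (Fin D) ℂ))).mulVec
        (perpComp n D z))) ≤ lam * Real.exp (t * γ) * evnorm (perpComp n D z) := by
  set M := P.map Complex.ofReal
  have hrow (u) : ∑ v, M u v = 1 := by simp [M, ← Complex.ofReal_sum, hPreg]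
  have hcol (v) : ∑ u, M u v = 1 := by simpa [M, hPsymm.apply] using hrow v
  have htH (v) : ‖(t : ℂ) • H v‖ ≤ t * ℓ := by
    rw [norm_smul, Complex.norm_real, Real.norm_of_nonneg ht.le]
    exact mul_le_mul_of_nonneg_left (hHnorm v) ht.le
  have hc1 : 0 ≤ Real.exp (t * ℓ) - 1 := by
    linarith [Real.add_one_le_exp (t * ℓ), mul_nonneg ht.le hℓ]
  have hc2 : 0 ≤ Real.exp (t * ℓ) - 1 - t * ℓ := by linarith [Real.add_one_le_exp (t * ℓ)]
  have hB1 (v) := norm_exp_sub_one_le_of_norm_le (𝕂 := ℂ) (htH v)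
  have hB2 (v) := norm_exp_sub_one_sub_le_of_norm_le (𝕂 := ℂ) (htH v)
  have hsum : ∑ v, (t : ℂ) • H v = 0 := by rw [← Finset.smul_sum, hHsum, smul_zero]
  set w := M ⊗ₖ (1 : Matrix (Fin D) (Fin D) ℂ) *ᵥ perpComp n D z
  have hw : parComp n D w = 0 := by rw [parComp_kronecker_one_mulVec hcol, parComp_perpComp]
  have hw_le : evnorm w ≤ lam * evnorm (perpComp n D z) :=
    evnorm_kronecker_one_mulVec_le hlam.1 hPexp (sum_perpComp_col z)
  have hE' : E = blockDiagonalFst fun v => NormedSpace.exp ((t : ℂ) • H v) := hE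
  rw [← mulVec_mulVec, ← mulVec_mulVec, kronecker_one_mulVec_parComp hrow]
  refine ⟨?_, ?_, ?_, ?_⟩
  · rw [hE']
    convert evnorm_parComp_blockDiagonalFst_mulVec_parComp_le hsum hc2 hB2 z using 2
    ring
  · rw [hE']
    exact evnorm_perpComp_blockDiagonalFst_mulVec_parComp_le hc1 hB1 z
  · rw [hE']
    calc _ ≤ (Real.exp (t * ℓ) - 1) * evnorm w :=
          evnorm_parComp_blockDiagonalFst_mulVec_le hc1 hB1 hw
      _ ≤ (Real.exp (t * ℓ) - 1) * (lam * evnorm (perpComp n D z)) := by gcongr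
      _ = _ := by ring
  · calc _ ≤ ‖E‖ * evnorm w := (evnorm_perpComp_le _).trans (evnorm_mulVec_le _ _)
      _ ≤ Real.exp (γ * t) * (lam * evnorm (perpComp n D z)) :=
          mul_le_mul hEnorm hw_le (evnorm_nonneg _) (Real.exp_pos _).le
      _ = _ := by rw [mul_comm γ t]; ring

/-- Healy-style lemma for expander walks with matrix weights. `P` is the normalized
adjacency matrix of a regular `λ`-expander, each vertex `v` carries `H_v` with
`‖H_v‖ ≤ ℓ` (spectral norm) and `∑_v H_v = 0`; `P̃ = P ⊗ I_D`, and `E` is block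
diagonal with blocks `exp(t H_v)`, satisfying `‖E‖ ≤ exp(γt)`. Then the four
contraction estimates on the parallel/orthogonal components hold. -/
theorem healy_lemma (n D : ℕ) (lam γ ℓ t : ℝ)
    (hlam : lam ∈ Set.Icc (0 : ℝ) 1) (hγ : 0 ≤ γ) (hℓ : 0 ≤ ℓ) (ht : 0 < t)
    (P : Matrix (Fin n) (Fin n) ℝ)
    (hPsymm : P.IsSymm) (hPnonneg : ∀ u v, 0 ≤ P u v)
    (hPreg : ∀ u, ∑ v, P u v = 1)
    (hPexp : ∀ x : Fin n → ℂ, (∑ i, x i) = 0 →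
      evnorm ((P.map (Complex.ofReal)).mulVec x) ≤ lam * evnorm x)
    (H : Fin n → Matrix (Fin D) (Fin D) ℂ)
    (hHnorm : ∀ v, ‖Matrix.toEuclideanCLM (𝕜 := ℂ) (H v)‖ ≤ ℓ)
    (hHsum : ∑ v, H v = 0)
    (E : Matrix (Fin n × Fin D) (Fin n × Fin D) ℂ)
    (hE : E = Matrix.of fun p q =>
      if p.1 = q.1 then NormedSpace.exp ((t : ℂ) • H p.1) p.2 q.2 else 0)
    (hEnorm : ‖Matrix.toEuclideanCLM (𝕜 := ℂ) E‖ ≤ Real.exp (γ * t))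
    (z : Fin n × Fin D → ℂ) :
    evnorm (parComp n D ((E * ((P.map (Complex.ofReal)) ⊗ₖ (1 : Matrix (Fin D) (Fin D) ℂ))).mulVec
        (parComp n D z))) ≤ (Real.exp (t * ℓ) - t * ℓ) * evnorm (parComp n D z) ∧
    evnorm (perpComp n D ((E * ((P.map (Complex.ofReal)) ⊗ₖ (1 : Matrix (Fin D) (Fin D) ℂ))).mulVec
        (parComp n D z))) ≤ (Real.exp (t * ℓ) - 1) * evnorm (parComp n D z) ∧
    evnorm (parComp n D ((E * ((P.map (Complex.ofReal)) ⊗ₖ (1 : Matrix (Fin D) (Fin D) ℂ))).mulVec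
        (perpComp n D z))) ≤ lam * (Real.exp (t * ℓ) - 1) * evnorm (perpComp n D z) ∧
    evnorm (perpComp n D ((E * ((P.map (Complex.ofReal)) ⊗ₖ (1 : Matrix (Fin D) (Fin D) ℂ))).mulVec
        (perpComp n D z))) ≤ lam * Real.exp (t * γ) * evnorm (perpComp n D z) :=
  healy_lemma_general n D lam γ ℓ t hlam hℓ ht P hPsymm hPreg hPexp H hHnorm hHsum E hE hEnorm z
end
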